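/- Let G be the group presented by generators n₁, n₂, n₃, n₄ and relators W₁ = n₄n₁n₂n₃n₄n₂n₄⁻¹n₃⁻¹n₂⁻¹n₁⁻¹n₄⁻¹n₁⁻¹, W₂ = n₄n₁n₂n₃n₄n₃n₄⁻¹n₃⁻¹n₂⁻¹n₁⁻¹n₄⁻¹n₂⁻¹, W₃ = n₄n₁n₂n₃n₄n₃⁻¹n₂⁻¹n₁⁻¹n₄⁻¹n₃⁻¹, together with n₁², n₂², n₃², n₄². There is a well-defined group homomorphism ε : G → ℤ/2ℤ with ε(n_i) = 1 for all i, and the kernel of ε is isomorphic to the group P presented by generators x, y, z and relators w₁ = z⁻¹x⁻¹yz⁻¹xz⁻¹yx⁻¹z⁻¹, w₂ = z⁻¹x⁻¹yz⁻¹yz⁻¹yx⁻¹z⁻¹x, w₃ = z⁻¹x⁻¹yz⁻¹yx⁻¹z⁻¹y, w₄ = zxy⁻¹zx⁻¹zy⁻¹xz, w₅ = zxy⁻¹zy⁻¹zy⁻¹xzx⁻¹, w₆ = zxy⁻¹zy⁻¹xzy⁻¹, via the isomorphism determined by x ↦ n₁n₂, y ↦ n₁n₃, z ↦ n₁n₄.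 -/

import Mathlib

namespace T45Fox

/-- Generators `n i` (`n_{i+1}` in the paper). -/
def n (i : Fin 4) : FreeGroup (Fin 4) := FreeGroup.of i

/-- The relators `W₁, W₂, W₃` together with the squares `n₁², n₂², n₃², n₄²`. -/
def relsG : Set (FreeGroup (Fin 4)) :=
  { n 3 * n 0 * n 1 * n 2 * n 3 * n 1 * (n 3)⁻¹ * (n 2)⁻¹ * (n 1)⁻¹ * (n 0)⁻¹
      * (n 3)⁻¹ * (n 0)⁻¹,
    n 3 * n 0 * n 1 * n 2 * n 3 * n 2 * (n 3)⁻¹ * (n 2)⁻¹ * (n 1)⁻¹ * (n 0)⁻¹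
      * (n 3)⁻¹ * (n 1)⁻¹,
    n 3 * n 0 * n 1 * n 2 * n 3 * (n 2)⁻¹ * (n 1)⁻¹ * (n 0)⁻¹ * (n 3)⁻¹ * (n 2)⁻¹,
    n 0 ^ 2, n 1 ^ 2, n 2 ^ 2, n 3 ^ 2 }

/-- The quotient of `G(T₄,₅)` by the normal closure of the squares of the
meridian generators. -/
abbrev G := PresentedGroup relsG

/-- The free generators `x, y, z`. -/
def x : FreeGroup (Fin 3) := FreeGroup.of 0
def y : FreeGroup (Fin 3) := FreeGroup.of 1
def z : FreeGroup (Fin 3) := FreeGroup.of 2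

/-- The six relators `w₁, …, w₆` of the presentation of `π₁(Σ₂T₄,₅)`. -/
def relsP : Set (FreeGroup (Fin 3)) :=
  { z⁻¹ * x⁻¹ * y * z⁻¹ * x * z⁻¹ * y * x⁻¹ * z⁻¹,
    z⁻¹ * x⁻¹ * y * z⁻¹ * y * z⁻¹ * y * x⁻¹ * z⁻¹ * x,
    z⁻¹ * x⁻¹ * y * z⁻¹ * y * x⁻¹ * z⁻¹ * y,
    z * x * y⁻¹ * z * x⁻¹ * z * y⁻¹ * x * z,
    z * x * y⁻¹ * z * y⁻¹ * z * y⁻¹ * x * z * x⁻¹,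
    z * x * y⁻¹ * z * y⁻¹ * x * z * y⁻¹ }

/-- The group `P = ⟨x, y, z ∣ w₁, …, w₆⟩`, i.e. `π₁(Σ₂T₄,₅)`. -/
abbrev P := PresentedGroup relsP

end T45Fox

/-!
Reidemeister–Schreier with transversal `{1, n₁}` identifies `ker ε` with `P` via
`n₁nᵢ ↦ x, y, z`. Conjugation by `n₁` inverts these three elements; on `P` this is the
automorphism `σ` inverting the generators, well defined because it swaps the relators
`w₁ ↔ w₄`, `w₂ ↔ w₅`, `w₃ ↔ w₆`. Hence `G ≅ P ⋊ C₂`: `μ` sends `nᵢ = (n₁nᵢ)⁻¹ n₁` to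
`(n₁nᵢ)⁻¹ ⋊ t`, and `ν (p ⋊ tᵏ) = φ p * n₁ᵏ` is a left inverse of `μ`. As `μ ∘ φ` is the
inclusion of `P`, `φ` is injective with image `μ⁻¹ P = ker (proj ∘ μ)`, and `ε := proj ∘ μ`.
-/

namespace SemidirectProduct

variable {N G H : Type*} [Group N] [Group G] [Group H] {ψ : G →* MulAut N}

theorem injective_of_comp_eq_inl {μ : H →* N ⋊[ψ] G} {φ : N →* H} (h : μ.comp φ = inl) :
    Function.Injective φ := by
  refine Function.Injective.of_comp (f := μ) ?_
  rw [← MonoidHom.coe_comp, h]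
  exact inl_injective

theorem range_eq_ker_of_comp_eq_inl {μ : H →* N ⋊[ψ] G} (hμ : Function.Injective μ)
    {φ : N →* H} (h : μ.comp φ = inl) : φ.range = (rightHom.comp μ).ker := by
  rw [← MonoidHom.comap_ker, ← range_inl_eq_ker_rightHom, ← h, MonoidHom.range_comp,
    Subgroup.comap_map_eq_self_of_injective hμ]

end SemidirectProduct

namespace Multiplicative

def zmodTwoHom {M : Type*} [Group M] (a : M) (ha : a ^ 2 = 1) : Multiplicative (ZMod 2) →* M :=
  AddMonoidHom.toMultiplicativeLeft <| ZMod.lift 2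
    ⟨zmultiplesHom (Additive M) (Additive.ofMul a), by
      simp only [zmultiplesHom_apply, natCast_zsmul, ← ofMul_pow, ha, ofMul_one]⟩

@[simp] theorem zmodTwoHom_ofAdd_one {M : Type*} [Group M] (a : M) (ha : a ^ 2 = 1) :
    zmodTwoHom a ha (ofAdd 1) = a :=
  congrArg Additive.toMul ((ZMod.lift_coe 2 _ 1).trans (one_zsmul _))

end Multiplicative

namespace FreeGroup

def invGens {α : Type*} : FreeGroup α →* FreeGroup α := lift fun a => (of a)⁻¹

@[simp] theorem invGens_of {α : Type*} (a : α) : invGens (of a) = (of a)⁻¹ := lift_apply_of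

end FreeGroup

namespace PresentedGroup

variable {α : Type*} {rels : Set (FreeGroup α)}

@[simp] theorem mk_of (a : α) : mk rels (FreeGroup.of a) = of a := rfl

def invGens (h : Set.MapsTo FreeGroup.invGens rels rels) :
    PresentedGroup rels →* PresentedGroup rels :=
  PresentedGroup.map FreeGroup.invGens h

@[simp] theorem invGens_of (h : Set.MapsTo FreeGroup.invGens rels rels) (a : α) :
    invGens h (of a) = (of a)⁻¹ :=
  show mk rels (FreeGroup.invGens (FreeGroup.of a)) = _ by simp

theorem invGens_comp_invGens (h : Set.MapsTo FreeGroup.invGens rels rels) :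
    (invGens h).comp (invGens h) = MonoidHom.id _ :=
  ext fun a => by simp

def invGensEquiv (h : Set.MapsTo FreeGroup.invGens rels rels) :
    PresentedGroup rels ≃* PresentedGroup rels :=
  (invGens h).toMulEquiv (invGens h) (invGens_comp_invGens h) (invGens_comp_invGens h)

@[simp] theorem invGensEquiv_of (h : Set.MapsTo FreeGroup.invGens rels rels) (a : α) :
    invGensEquiv h (of a) = (of a)⁻¹ :=
  invGens_of h a

theorem invGensEquiv_sq (h : Set.MapsTo FreeGroup.invGens rels rels) : invGensEquiv h ^ 2 = 1 :=
  MulEquiv.ext fun w => DFunLike.congr_fun (invGens_comp_invGens h) w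

end PresentedGroup

namespace T45Fox

open PresentedGroup SemidirectProduct Multiplicative

theorem mapsTo_invGens_relsP : Set.MapsTo FreeGroup.invGens relsP relsP := by
  rintro r (rfl | rfl | rfl | rfl | rfl | rfl) <;> simp [relsP, x, y, z]

noncomputable abbrev σ : MulAut P := invGensEquiv mapsTo_invGens_relsP

noncomputable abbrev ρ : Multiplicative (ZMod 2) →* MulAut P :=
  zmodTwoHom σ (invGensEquiv_sq _)

theorem of_mul_self (i : Fin 4) : (of i : G) * of i = 1 := by
  have hmem : n i ^ 2 ∈ relsG := by fin_cases i <;> simp [relsG]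
  simpa [n, sq] using one_of_mem (rels := relsG) hmem

theorem of_inv (i : Fin 4) : (of i : G)⁻¹ = of i :=
  inv_eq_of_mul_eq_one_right (of_mul_self i)

theorem of_mul_of_mul_self (i : Fin 4) (a : G) : of i * (of i * a) = a := by
  rw [← mul_assoc, of_mul_self, one_mul]

theorem lift_relsP_eq_one :
    ∀ r ∈ relsP, FreeGroup.lift ![(of 0 * of 1 : G), of 0 * of 2, of 0 * of 3] r = 1 := by
  -- `W₁, W₂, W₃`, the first three elements of `relsG`, are found by unification
  have hW₁ := one_of_mem (rels := relsG) (Set.mem_insert _ _)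
  have hW₂ := one_of_mem (rels := relsG) (Set.mem_insert_of_mem _ (Set.mem_insert _ _))
  have hW₃ := one_of_mem (rels := relsG)
    (Set.mem_insert_of_mem _ (Set.mem_insert_of_mem _ (Set.mem_insert _ _)))
  simp only [n, map_mul, map_inv, mk_of, of_inv, mul_assoc] at hW₁ hW₂ hW₃
  have hconj {a : G} (h : a = 1) : of 0 * (a * of 0) = 1 := by rw [h, one_mul, of_mul_self]
  rintro r (rfl | rfl | rfl | rfl | rfl | rfl) <;>
    simp only [x, y, z, map_mul, map_inv, FreeGroup.lift_apply_of, Matrix.cons_val,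
      mul_inv_rev, of_inv, mul_assoc, of_mul_of_mul_self]
  · exact hW₁
  · exact hW₂
  · exact hW₃
  · simpa only [mul_assoc, of_mul_self, mul_one] using hconj hW₁
  · simpa only [mul_assoc, of_mul_self, mul_one] using hconj hW₂
  · simpa only [mul_assoc, of_mul_self, mul_one] using hconj hW₃

noncomputable def φ : P →* G := toGroup lift_relsP_eq_one

theorem φ_comp_σ_eq_conj :
    φ.comp σ.toMonoidHom = (MulAut.conj (of 0 : G)).toMonoidHom.comp φ := by
  ext i
  fin_cases i <;> simp [φ, of_inv, of_mul_of_mul_self]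

noncomputable def κ : Multiplicative (ZMod 2) →* G :=
  zmodTwoHom (of 0) (by rw [sq, of_mul_self])

noncomputable def ν : P ⋊[ρ] Multiplicative (ZMod 2) →* G :=
  SemidirectProduct.lift φ κ fun s => by
    obtain rfl | rfl : s = 1 ∨ s = ofAdd 1 := by revert s; decide
    · ext; simp
    · simpa [κ] using φ_comp_σ_eq_conj

/-- `u i` is the element of `P` corresponding to `n 0 * n i`. -/
noncomputable def u : Fin 4 → P := ![1, of 0, of 1, of 2]

theorem σ_u (i : Fin 4) : σ (u i) = (u i)⁻¹ := by
  fin_cases i <;> simp [u]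

noncomputable def m (i : Fin 4) : P ⋊[ρ] Multiplicative (ZMod 2) := inl (u i)⁻¹ * inr (ofAdd 1)

theorem m_mul_m (i j : Fin 4) : m i * m j = inl ((u i)⁻¹ * u j) := by
  ext
  · simp [m, σ_u]
  · simp only [m, mul_right, right_inl, right_inr, one_mul]
    decide

theorem m_mul_m_mul_inl (i j : Fin 4) (a : P) :
    m i * (m j * inl a) = inl ((u i)⁻¹ * u j * a) := by
  rw [← mul_assoc, m_mul_m, ← map_mul]

theorem m_inv (i : Fin 4) : (m i)⁻¹ = m i :=
  inv_eq_of_mul_eq_one_right (by simp [m_mul_m])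

theorem lift_relsG_eq_one : ∀ r ∈ relsG, FreeGroup.lift m r = 1 := by
  have hw₁ := one_of_mem (rels := relsP) (Set.mem_insert _ _)
  have hw₂ := one_of_mem (rels := relsP) (Set.mem_insert_of_mem _ (Set.mem_insert _ _))
  have hw₃ := one_of_mem (rels := relsP)
    (Set.mem_insert_of_mem _ (Set.mem_insert_of_mem _ (Set.mem_insert _ _)))
  simp only [x, y, z, map_mul, map_inv, mk_of, mul_assoc] at hw₁ hw₂ hw₃
  rintro r (rfl | rfl | rfl | rfl | rfl | rfl | rfl) <;>
    simp only [n, sq, map_mul, map_inv, FreeGroup.lift_apply_of, m_inv, mul_assoc] <;>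
    simp only [m_mul_m, m_mul_m_mul_inl, map_eq_one_iff _ inl_injective, inv_mul_cancel, u,
      Matrix.cons_val, inv_one, mul_one, mul_assoc]
  exacts [hw₁, hw₂, hw₃]

noncomputable def μ : G →* P ⋊[ρ] Multiplicative (ZMod 2) := toGroup lift_relsG_eq_one

theorem ν_comp_μ : ν.comp μ = MonoidHom.id G := by
  ext i
  fin_cases i <;> simp [ν, μ, m, u, κ, φ, of_inv, mul_assoc, of_mul_self]

theorem μ_injective : Function.Injective μ :=
  Function.LeftInverse.injective (g := ν) (DFunLike.congr_fun ν_comp_μ)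

theorem μ_comp_φ : μ.comp φ = inl := by
  refine PresentedGroup.ext fun i => ?_
  fin_cases i <;> simp [μ, φ, m_mul_m, u]

theorem rightHom_μ_of (i : Fin 4) : rightHom (μ (of i)) = ofAdd 1 := by
  simp [μ, m]

end T45Fox

/-- There is a homomorphism `ε : G → ℤ/2ℤ` sending every generator `n_i` to `1`,
and its kernel is isomorphic to `P` via `x ↦ n₁n₂`, `y ↦ n₁n₃`, `z ↦ n₁n₄`:
there is an injective homomorphism `φ : P → G` with range `ker ε` realizing
these values. -/
theorem stmt11 :
    ∃ ε : T45Fox.G →* Multiplicative (ZMod 2),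
      (∀ i : Fin 4, ε (PresentedGroup.of i) = Multiplicative.ofAdd 1) ∧
      ∃ φ : T45Fox.P →* T45Fox.G,
        Function.Injective φ ∧
        φ.range = ε.ker ∧
        φ (PresentedGroup.of 0) = PresentedGroup.of 0 * PresentedGroup.of 1 ∧
        φ (PresentedGroup.of 1) = PresentedGroup.of 0 * PresentedGroup.of 2 ∧
        φ (PresentedGroup.of 2) = PresentedGroup.of 0 * PresentedGroup.of 3 :=
  ⟨SemidirectProduct.rightHom.comp T45Fox.μ, T45Fox.rightHom_μ_of, T45Fox.φ,
    SemidirectProduct.injective_of_comp_eq_inl T45Fox.μ_comp_φ,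
    SemidirectProduct.range_eq_ker_of_comp_eq_inl T45Fox.μ_injective T45Fox.μ_comp_φ,
    PresentedGroup.toGroup.of _, PresentedGroup.toGroup.of _, PresentedGroup.toGroup.of _⟩
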